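/- arXiv:2105.11295 — 6 statements merged into one kernel-verified Lean document; each statement's English description precedes it below -/
import Mathlib

section
/- Let 𝔗 be a C*-algebra and φ : 𝔗 → ℂ a bounded linear functional with weak-* continuous extension φ̂ to the bidual 𝔗**. If ω : 𝔗** → ℂ is a positive linear functional with ‖ω‖ = ‖φ‖ such that |φ̂(ξ)|² ≤ ‖φ‖ · ω(ξξ*) for every ξ ∈ 𝔗**, then ω equals the absolute value |φ| arising from the polar decomposition of φ. -/
open ComplexOrder Filter Topology

section AbsValue

variable (M : Type*) [NormedRing M] [StarRing M] [NormedAlgebra ℂ M]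

/-- `absΦ` is the absolute value (from the polar decomposition) of the weak-*
continuous functional `Φ` on the von Neumann algebra `M`, with partial isometry `v`:
`Φ = absΦ(· v)`, `absΦ` is positive, and `M(1 - v*v) = {ξ | absΦ(ξ*ξ) = 0}`. -/
def IsAbsValue (Φ absΦ : M →L[ℂ] ℂ) (v : M) : Prop :=
  v * star v * v = v ∧
  (∀ ξ : M, 0 ≤ absΦ (star ξ * ξ)) ∧
  (∀ ξ : M, Φ ξ = absΦ (ξ * v)) ∧
  (∀ ξ : M, absΦ (star ξ * ξ) = 0 ↔ ξ * (star v * v) = 0)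

end AbsValue

section Setup

variable (T M : Type*) [NormedRing T] [StarRing T] [NormedAlgebra ℂ T]
  [NormedRing M] [StarRing M] [NormedAlgebra ℂ M]

/-- Abstract model of the canonical inclusion `ι` of a unital C*-algebra `T` into its
bidual von Neumann algebra `M = T**`, together with the weak-* continuous extension
`hat φ` of each bounded functional `φ` on `T`, and the polar decomposition data
(`absVal φ = |φ|`, with partial isometry `pIso φ`). -/
structure BidualSetup where
  ι : T →L[ℂ] M
  ι_mul : ∀ s t : T, ι (s * t) = ι s * ι t
  ι_star : ∀ t : T, ι (star t) = star (ι t)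
  ι_one : ι 1 = 1
  ι_isom : ∀ t : T, ‖ι t‖ = ‖t‖
  hat : (T →L[ℂ] ℂ) →ₗ[ℂ] (M →L[ℂ] ℂ)
  hat_ext : ∀ (φ : T →L[ℂ] ℂ) (t : T), hat φ (ι t) = φ t
  hat_norm : ∀ φ : T →L[ℂ] ℂ, ‖hat φ‖ = ‖φ‖
  absVal : (T →L[ℂ] ℂ) → (M →L[ℂ] ℂ)
  pIso : (T →L[ℂ] ℂ) → M
  polar : ∀ φ : T →L[ℂ] ℂ, IsAbsValue M (hat φ) (absVal φ) (pIso φ)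

end Setup

section AC

variable {T M : Type*} [NormedRing T] [StarRing T] [NormedAlgebra ℂ T]
  [NormedRing M] [StarRing M] [NormedAlgebra ℂ M]

/-- `φ` is absolutely continuous with respect to `ψ`:
`|ψ|(ξ*ξ) = 0` implies `|φ|(ξ*ξ) = 0` for all `ξ ∈ T**`. -/
def AbsCont (B : BidualSetup T M) (φ ψ : T →L[ℂ] ℂ) : Prop :=
  ∀ ξ : M, B.absVal ψ (star ξ * ξ) = 0 → B.absVal φ (star ξ * ξ) = 0

/-- The support projection `s_φ = v_φ* v_φ` of a functional `φ` on `T`. -/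
def suppProj (B : BidualSetup T M) (φ : T →L[ℂ] ℂ) : M :=
  star (B.pIso φ) * B.pIso φ

/-- A state on a unital C*-algebra: a positive unital functional. -/
def IsStateOn (δ : T →L[ℂ] ℂ) : Prop :=
  (∀ t : T, 0 ≤ δ (star t * t)) ∧ δ 1 = 1

end AC

/-!
Write `Φ = φ̂`, `c = ‖φ‖` and `s = v⋆v` for the support projection of `φ`. Since `|φ|` lives on
`s` and `‖|φ|‖ = ‖Φ‖`, one gets `Φ (v⋆) = |φ| (1) = c`. The hypothesis at `ξ = v⋆` then gives
`ω (s) ≥ c = ‖ω‖ ≥ ω (1)`, so `ω` also lives on `s` and `ω (v⋆ v) = c`. Perturbing `v⋆` to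
`v⋆ + t η`, the hypothesis becomes an equality at `t = 0`, so its first-order term in `t` must
vanish: `ω (η v) = 0` forces `Φ (η) = 0`. Hence `Φ = ω (· v)` and
`|φ| = Φ (· v⋆) = ω (· s) = ω`.
-/

open ComplexConjugate

section PositiveFunctional

variable {M F : Type*} [Ring M] [StarRing M] [Algebra ℂ M] [StarModule ℂ M]
  [FunLike F M ℂ] [LinearMapClass F ℂ M ℂ] {f : F}

theorem map_star_of_nonneg (hf : ∀ x : M, 0 ≤ f (star x * x)) (x : M) :
    f (star x) = conj (f x) := by
  have him (y : M) : (f y).im + (f (star y)).im = 0 := by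
    have h := (Complex.nonneg_iff.1 (hf (1 + y))).2
    have h1 := (Complex.nonneg_iff.1 (hf 1)).2
    have hy := (Complex.nonneg_iff.1 (hf y)).2
    simp only [star_add, star_one, add_mul, mul_add, one_mul, mul_one, map_add,
      Complex.add_im] at h h1
    linarith
  have hre := him (Complex.I • x)
  simp only [star_smul, Complex.star_def, Complex.conj_I, map_smul, smul_eq_mul, neg_smul,
    map_neg, Complex.neg_im, Complex.mul_im, Complex.I_re, Complex.I_im] at hre
  apply Complex.ext <;> simp only [Complex.conj_re, Complex.conj_im] <;> linarith [him x]

@[reducible]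
def preInnerProductCoreOfNonneg (hf : ∀ x : M, 0 ≤ f (star x * x)) :
    PreInnerProductSpace.Core ℂ M where
  inner x y := f (star x * y)
  conj_inner_symm x y := by rw [← map_star_of_nonneg hf, star_mul, star_star]
  re_inner_nonneg x := (Complex.nonneg_iff.1 (hf x)).1
  add_left x y z := by rw [star_add, add_mul, map_add]
  smul_left x y r := by rw [star_smul, smul_mul_assoc, map_smul, smul_eq_mul, Complex.star_def]

theorem norm_map_star_mul_sq_le (hf : ∀ x : M, 0 ≤ f (star x * x)) (x y : M) :
    ‖f (star x * y)‖ ^ 2 ≤ (f (star x * x)).re * (f (star y * y)).re := by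
  let := preInnerProductCoreOfNonneg hf
  have h := InnerProductSpace.Core.inner_mul_inner_self_le (𝕜 := ℂ) x y
  have hswap : ‖f (star y * x)‖ = ‖f (star x * y)‖ := by
    rw [← Complex.norm_conj, ← map_star_of_nonneg hf, star_mul, star_star]
  rw [sq]
  nth_rewrite 2 [← hswap]
  exact h

theorem map_mul_eq_zero_of_map_star_mul_self_eq_zero (hf : ∀ x : M, 0 ≤ f (star x * x)) {x : M}
    (hx : f (star x * x) = 0) (y : M) : f (y * x) = 0 := by
  have h := norm_map_star_mul_sq_le hf (star y) x
  rw [hx, star_star, Complex.zero_re, mul_zero] at h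
  exact norm_eq_zero.1 (pow_eq_zero_iff two_ne_zero |>.1 (le_antisymm h (sq_nonneg _)))

theorem map_mul_of_map_one_sub_eq_zero (hf : ∀ x : M, 0 ≤ f (star x * x)) {p : M}
    (hp : IsStarProjection p) (h : f (1 - p) = 0) (x : M) : f (x * p) = f x := by
  have hp' : star (1 - p) * (1 - p) = 1 - p := by
    rw [hp.one_sub.isSelfAdjoint.star_eq, hp.one_sub.isIdempotentElem.eq]
  have := map_mul_eq_zero_of_map_star_mul_self_eq_zero hf (hp' ▸ h) x
  rwa [mul_sub, mul_one, map_sub, sub_eq_zero, eq_comm] at this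

theorem apply_eq_zero_of_map_mul_star_eq_zero {Φ ω : F} {w : M} {c : ℝ}
    (hω : ∀ x : M, 0 ≤ ω (star x * x)) (hc : 0 < c) (hΦw : Φ w = c) (hωw : ω (w * star w) = c)
    (hS : ∀ x : M, ‖Φ x‖ ^ 2 ≤ c * ‖ω (x * star x)‖) {η : M} (hη : ω (η * star w) = 0) :
    Φ η = 0 := by
  have hη' : ω (w * star η) = 0 := by
    rw [show w * star η = star (η * star w) by rw [star_mul, star_star], map_star_of_nonneg hω,
      hη, map_zero]
  have hexpand (t : ℂ) :
      ω ((w + t • η) * star (w + t • η)) = c + (‖t‖ ^ 2 : ℂ) * ω (η * star η) := by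
    simp only [star_add, star_smul, add_mul, mul_add, smul_mul_assoc, mul_smul_comm, map_add,
      map_smul, smul_eq_mul, hωw, hη, hη', Complex.star_def, mul_zero, add_zero, zero_add]
    rw [← mul_assoc, Complex.conj_mul']
  -- `t = r • conj (Φ η)` makes the first-order term `2 c r ‖Φ η‖²`; all others are `O(r²)`.
  have hquad (r : ℝ) (hr : 0 < r) :
      2 * c * ‖Φ η‖ ^ 2 ≤ r * (c * ‖Φ η‖ ^ 2 * ‖ω (η * star η)‖) := by
    have h := hS (w + ((r : ℂ) * conj (Φ η)) • η)
    have hΦ : Φ (w + ((r : ℂ) * conj (Φ η)) • η) = ((c + r * ‖Φ η‖ ^ 2 : ℝ) : ℂ) := by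
      rw [map_add, map_smul, hΦw, smul_eq_mul, mul_assoc, Complex.conj_mul']
      push_cast
      ring
    have hωbound : ‖ω ((w + ((r : ℂ) * conj (Φ η)) • η) * star (w + ((r : ℂ) * conj (Φ η)) • η))‖
        ≤ c + r ^ 2 * ‖Φ η‖ ^ 2 * ‖ω (η * star η)‖ := by
      rw [hexpand]
      refine (norm_add_le _ _).trans ?_
      simp only [Complex.norm_real, norm_mul, norm_pow, Complex.norm_conj, Real.norm_eq_abs,
        abs_of_pos hc, abs_of_pos hr, abs_norm]
      exact le_of_eq (by ring)
    rw [hΦ, Complex.norm_real, Real.norm_of_nonneg (by positivity)] at h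
    refine le_of_mul_le_mul_left ?_ hr
    nlinarith [mul_le_mul_of_nonneg_left hωbound hc.le, sq_nonneg (r * ‖Φ η‖ ^ 2)]
  by_contra hz
  have hz' : 0 < ‖Φ η‖ := norm_pos_iff.2 hz
  set b := ‖ω (η * star η)‖
  have hr : 1 / (b + 1) * b < 1 := by
    rw [div_mul_eq_mul_div, one_mul, div_lt_one (by positivity)]
    linarith
  have := hquad (1 / (b + 1)) (by positivity)
  nlinarith [mul_pos hc (pow_pos hz' 2)]

theorem apply_eq_map_mul_star_of_norm_sq_le {Φ ω : F} {w : M} {c : ℝ}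
    (hω : ∀ x : M, 0 ≤ ω (star x * x)) (hc : 0 < c) (hΦw : Φ w = c) (hωw : ω (w * star w) = c)
    (hS : ∀ x : M, ‖Φ x‖ ^ 2 ≤ c * ‖ω (x * star x)‖) (x : M) :
    Φ x = ω (x * star w) := by
  have hc' : (c : ℂ) ≠ 0 := Complex.ofReal_ne_zero.2 hc.ne'
  have h0 : ω ((x - (ω (x * star w) / c) • w) * star w) = 0 := by
    rw [sub_mul, smul_mul_assoc, map_sub, map_smul, hωw, smul_eq_mul, div_mul_cancel₀ _ hc',
      sub_self]
  have h := apply_eq_zero_of_map_mul_star_eq_zero hω hc hΦw hωw hS h0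
  rwa [map_sub, map_smul, hΦw, smul_eq_mul, div_mul_cancel₀ _ hc', sub_eq_zero] at h

end PositiveFunctional

theorem isStarProjection_star_mul_self_of_mul_star_mul_eq {M : Type*} [Semiring M] [StarRing M]
    {v : M} (hv : v * star v * v = v) : IsStarProjection (star v * v) where
  isIdempotentElem := by rw [IsIdempotentElem, mul_assoc, ← mul_assoc v, hv]
  isSelfAdjoint := .star_mul_self v

theorem opNorm_le_of_forall_apply_eq_map_mul {M : Type*} [NormedRing M] [NormedAlgebra ℂ M]
    {f g : M →L[ℂ] ℂ} {u : M} (hu : ‖u‖ ≤ 1) (h : ∀ x, g x = f (x * u)) : ‖g‖ ≤ ‖f‖ :=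
  g.opNorm_le_bound (norm_nonneg f) fun x => calc
    ‖g x‖ ≤ ‖f‖ * ‖x * u‖ := h x ▸ f.le_opNorm _
    _ ≤ ‖f‖ * (‖x‖ * 1) := by gcongr; exact (norm_mul_le x u).trans (by gcongr)
    _ = ‖f‖ * ‖x‖ := by rw [mul_one]

section CStarRing

variable {M : Type*} [NormedRing M] [StarRing M] [CStarRing M]

theorem norm_le_one_of_mul_star_mul_eq {v : M} (hv : v * star v * v = v) : ‖v‖ ≤ 1 := by
  have h := (isStarProjection_star_mul_self_of_mul_star_mul_eq hv).norm_le
  rw [CStarRing.norm_star_mul_self] at h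
  nlinarith [norm_nonneg v]

theorem CStarRing.norm_one_le : ‖(1 : M)‖ ≤ 1 :=
  (IsStarProjection.one M).norm_le

variable [NormedAlgebra ℂ M] [StarModule ℂ M] {f : M →L[ℂ] ℂ}

theorem map_one_eq_norm_of_nonneg (hf : ∀ x : M, 0 ≤ f (star x * x)) : f 1 = ‖f‖ := by
  have hf1 : 0 ≤ f 1 := by simpa using hf 1
  have hre : (f 1).re ≤ ‖f‖ := calc
    (f 1).re ≤ ‖f 1‖ := Complex.re_le_norm _
    _ ≤ ‖f‖ * ‖(1 : M)‖ := f.le_opNorm 1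
    _ ≤ ‖f‖ := mul_le_of_le_one_right (norm_nonneg f) CStarRing.norm_one_le
  have hbound (x : M) : ‖f x‖ ≤ √((f 1).re * ‖f‖) * ‖x‖ := by
    have hx : (f (star x * x)).re ≤ ‖f‖ * ‖x‖ ^ 2 := calc
      (f (star x * x)).re ≤ ‖f‖ * ‖star x * x‖ := (Complex.re_le_norm _).trans (f.le_opNorm _)
      _ = ‖f‖ * ‖x‖ ^ 2 := by rw [CStarRing.norm_star_mul_self, sq]
    have h := norm_map_star_mul_sq_le hf 1 x
    rw [star_one, one_mul, one_mul] at h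
    rw [← Real.sqrt_sq (norm_nonneg x), ← Real.sqrt_mul' _ (sq_nonneg _)]
    refine Real.le_sqrt_of_sq_le (h.trans ?_)
    rw [mul_assoc]
    exact mul_le_mul_of_nonneg_left hx (Complex.nonneg_iff.1 hf1).1
  have hnorm : ‖f‖ ≤ √((f 1).re * ‖f‖) := f.opNorm_le_bound (Real.sqrt_nonneg _) hbound
  have hle : ‖f‖ ≤ (f 1).re := by
    rcases (norm_nonneg f).eq_or_lt with h0 | hpos
    · rw [← h0]; exact (Complex.nonneg_iff.1 hf1).1
    · have := (Real.le_sqrt' hpos).1 hnorm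
      nlinarith
  rw [Complex.eq_re_of_ofReal_le hf1, le_antisymm hre hle]

theorem map_eq_norm_of_norm_le (hf : ∀ x : M, 0 ≤ f (star x * x)) {p : M}
    (hp : IsStarProjection p) (h : ‖f‖ ≤ ‖f p‖) : f p = ‖f‖ := by
  have hp0 : 0 ≤ f p := by simpa [hp.isSelfAdjoint.star_eq, hp.isIdempotentElem.eq] using hf p
  have hp1 : 0 ≤ f (1 - p) := by
    simpa [hp.one_sub.isSelfAdjoint.star_eq, hp.one_sub.isIdempotentElem.eq] using hf (1 - p)
  refine le_antisymm ?_ ?_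
  · rw [← map_one_eq_norm_of_nonneg hf, ← sub_nonneg, ← map_sub]
    exact hp1
  · rw [Complex.eq_coe_norm_of_nonneg hp0]
    exact Complex.real_le_real.2 h

end CStarRing

namespace IsAbsValue

variable {M : Type*} [NormedRing M] [StarRing M] [NormedAlgebra ℂ M] {Φ A : M →L[ℂ] ℂ} {v : M}

theorem isStarProjection (h : IsAbsValue M Φ A v) : IsStarProjection (star v * v) :=
  isStarProjection_star_mul_self_of_mul_star_mul_eq h.1

variable [StarModule ℂ M]

theorem map_mul_star_mul_self (h : IsAbsValue M Φ A v) (x : M) :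
    A (x * (star v * v)) = A x := by
  have hp := h.isStarProjection.one_sub
  have h0 := (h.2.2.2 (1 - star v * v)).2 h.isStarProjection.one_sub_mul_self
  rw [hp.isSelfAdjoint.star_eq, hp.isIdempotentElem.eq] at h0
  exact map_mul_of_map_one_sub_eq_zero h.2.1 h.isStarProjection h0 x

theorem apply_eq_map_mul_star (h : IsAbsValue M Φ A v) (x : M) : A x = Φ (x * star v) := by
  rw [h.2.2.1, mul_assoc, h.map_mul_star_mul_self]

variable [CStarRing M]

theorem opNorm_eq (h : IsAbsValue M Φ A v) : ‖A‖ = ‖Φ‖ := by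
  have hv := norm_le_one_of_mul_star_mul_eq h.1
  exact le_antisymm (opNorm_le_of_forall_apply_eq_map_mul (by rwa [norm_star])
    h.apply_eq_map_mul_star) (opNorm_le_of_forall_apply_eq_map_mul hv h.2.2.1)

theorem map_star_eq_norm (h : IsAbsValue M Φ A v) : Φ (star v) = ‖Φ‖ := by
  rw [h.2.2.1, ← one_mul (star v * v), h.map_mul_star_mul_self, map_one_eq_norm_of_nonneg h.2.1,
    h.opNorm_eq]

end IsAbsValue

theorem stmt0_general {T M : Type*} [NormedRing T] [StarRing T]
    [NormedAlgebra ℂ T]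
    [NormedRing M] [StarRing M] [CStarRing M]
    [NormedAlgebra ℂ M] [StarModule ℂ M]
    (B : BidualSetup T M) (φ : T →L[ℂ] ℂ) (ω : M →L[ℂ] ℂ)
    (hωpos : ∀ ξ : M, 0 ≤ ω (star ξ * ξ))
    (hωnorm : ‖ω‖ = ‖φ‖)
    (hSchwarz : ∀ ξ : M, ‖B.hat φ ξ‖ ^ 2 ≤ ‖φ‖ * ‖ω (ξ * star ξ)‖) :
    ω = B.absVal φ := by
  have h := B.polar φ
  set v := B.pIso φ
  rw [← B.hat_norm φ] at hωnorm hSchwarz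
  rcases (norm_nonneg (B.hat φ)).eq_or_lt with hc | hc
  · ext ξ
    rw [norm_eq_zero.1 (hωnorm.trans hc.symm), norm_eq_zero.1 (h.opNorm_eq.trans hc.symm)]
  have hΦv := h.map_star_eq_norm
  have hωs : ω (star v * v) = ‖ω‖ := by
    refine map_eq_norm_of_norm_le hωpos h.isStarProjection ?_
    have hS := hSchwarz (star v)
    rw [star_star, hΦv, Complex.norm_real, Real.norm_of_nonneg hc.le] at hS
    rw [hωnorm]
    nlinarith
  have hΦω := apply_eq_map_mul_star_of_norm_sq_le hωpos hc hΦv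
    (by rw [star_star, hωs, hωnorm]) hSchwarz
  have hω1 : ω (1 - star v * v) = 0 := by
    rw [map_sub, map_one_eq_norm_of_nonneg hωpos, hωs, sub_self]
  ext ξ
  rw [h.apply_eq_map_mul_star, hΦω, star_star, mul_assoc,
    map_mul_of_map_one_sub_eq_zero hωpos h.isStarProjection hω1]

/-- uniqueness of the absolute value, Takesaki III.4.6:
if `ω` is a positive functional on `T**` with `‖ω‖ = ‖φ‖` and
`|φ̂(ξ)|² ≤ ‖φ‖ ω(ξξ*)` for all `ξ ∈ T**`, then `ω = |φ|`. -/
theorem stmt0 {T M : Type*} [NormedRing T] [StarRing T] [CStarRing T]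
    [NormedAlgebra ℂ T] [StarModule ℂ T] [CompleteSpace T]
    [NormedRing M] [StarRing M] [CStarRing M]
    [NormedAlgebra ℂ M] [StarModule ℂ M] [CompleteSpace M]
    (B : BidualSetup T M) (φ : T →L[ℂ] ℂ) (ω : M →L[ℂ] ℂ)
    (hωpos : ∀ ξ : M, 0 ≤ ω (star ξ * ξ))
    (hωnorm : ‖ω‖ = ‖φ‖)
    (hSchwarz : ∀ ξ : M, ‖B.hat φ ξ‖ ^ 2 ≤ ‖φ‖ * ‖ω (ξ * star ξ)‖) :
    ω = B.absVal φ :=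
  stmt0_general B φ ω hωpos hωnorm hSchwarz
end

section
/- Let 𝔗 be a C*-algebra, π : 𝔗 → B(H) a *-representation, and φ : π(𝔗) → ℂ a bounded linear functional. Then |φ ∘ π| = |φ| ∘ π**, where π** : 𝔗** → π(𝔗)** is the weak-* continuous extension of π. -/
open ComplexOrder Filter Topology

/-! Let `v`, `w` be the partial isometries of `ψ` and `φ`, and `c = π''(v)* w`. Comparing the
polar decompositions through `ψ̂ = φ̂ ∘ π''` gives `|ψ| = |φ|(π''(·) c)`, so `|φ|(· c)` is
positive, and `|φ|(c* c) = |φ|(1)`. Since `‖c‖ ≤ 1` and a positive functional `g` on a C*-algebra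
has `‖g‖ = g(1)`, this forces `|φ|(c) = |φ|(1)`, hence `|φ|((1 - c)* (1 - c)) = 0`, and by
Cauchy–Schwarz `c` acts as the identity under `|φ|`. -/

namespace PositiveFunctional

section Algebraic

variable {M F : Type*} [Ring M] [StarRing M] [Algebra ℂ M] [StarModule ℂ M]
  [FunLike F M ℂ] [LinearMapClass F ℂ M ℂ]

lemma apply_star_mul_eq_conj (g : F) (hg : ∀ x : M, 0 ≤ g (star x * x)) (x y : M) :
    g (star y * x) = starRingEnd ℂ (g (star x * y)) := by
  have im_eq_zero (z : M) : (g (star z * z)).im = 0 := (Complex.nonneg_iff.mp (hg z)).2.symm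
  have h₁ := im_eq_zero (x + y)
  have h₂ := im_eq_zero (x + Complex.I • y)
  simp only [star_add, add_mul, mul_add, map_add, star_smul, smul_mul_assoc, mul_smul_comm,
    map_smul, smul_eq_mul, RCLike.star_def, Complex.conj_I, Complex.add_im, Complex.mul_im,
    Complex.mul_re, Complex.neg_im, Complex.I_re, Complex.I_im, neg_mul, mul_neg,
    im_eq_zero] at h₁ h₂
  apply Complex.ext <;> simp only [Complex.conj_re, Complex.conj_im] <;> linarith

lemma apply_star (g : F) (hg : ∀ x : M, 0 ≤ g (star x * x)) (x : M) :
    g (star x) = starRingEnd ℂ (g x) := by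
  simpa using apply_star_mul_eq_conj g hg 1 x

abbrev preInnerProductCore (g : F) (hg : ∀ x : M, 0 ≤ g (star x * x)) :
    PreInnerProductSpace.Core ℂ M where
  inner x y := g (star x * y)
  conj_inner_symm x y := (apply_star_mul_eq_conj g hg y x).symm
  re_inner_nonneg x := (Complex.nonneg_iff.mp (hg x)).1
  add_left x y z := by simp only [star_add, add_mul, map_add]
  smul_left x y r := by
    simp only [star_smul, smul_mul_assoc, map_smul, smul_eq_mul, RCLike.star_def]

lemma norm_apply_star_mul_sq_le (g : F) (hg : ∀ x : M, 0 ≤ g (star x * x)) (x y : M) :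
    ‖g (star x * y)‖ ^ 2 ≤ ‖g (star x * x)‖ * ‖g (star y * y)‖ := by
  have :=
    @InnerProductSpace.Core.inner_mul_inner_self_le ℂ M _ _ _ (preInnerProductCore g hg) x y
  change ‖g (star x * y)‖ * ‖g (star y * x)‖ ≤ (g (star x * x)).re * (g (star y * y)).re at this
  rw [apply_star_mul_eq_conj g hg x y, Complex.norm_conj, ← sq] at this
  exact this.trans (mul_le_mul (Complex.re_le_norm _) (Complex.re_le_norm _)
    (Complex.nonneg_iff.mp (hg y)).1 (norm_nonneg _))

lemma apply_mul_eq_zero (g : F) (hg : ∀ x : M, 0 ≤ g (star x * x)) {z : M}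
    (hz : g (star z * z) = 0) (x : M) : g (x * z) = 0 := by
  have h := norm_apply_star_mul_sq_le g hg (star x) z
  rw [hz, norm_zero, mul_zero, star_star] at h
  exact norm_eq_zero.mp (pow_eq_zero_iff two_ne_zero |>.mp (le_antisymm h (by positivity)))

lemma apply_mul_eq_apply (g : F) (hg : ∀ x : M, 0 ≤ g (star x * x)) {z : M}
    (hz : g (star (1 - z) * (1 - z)) = 0) (x : M) : g (x * z) = g x := by
  have h := apply_mul_eq_zero g hg hz x
  rwa [mul_sub, mul_one, map_sub, sub_eq_zero, eq_comm] at h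

lemma apply_mul_eq_apply_of_apply_eq (g : F) (hg : ∀ x : M, 0 ≤ g (star x * x)) {c : M}
    (hc : g c = g 1) (hcc : g (star c * c) = g 1) (x : M) : g (x * c) = g x := by
  refine apply_mul_eq_apply g hg ?_ x
  have hc' : g (star c) = g 1 := by
    rw [apply_star g hg, hc, ← apply_star g hg, star_one]
  have expand : star (1 - c) * (1 - c) = 1 - c - star c + star c * c := by
    rw [star_sub, star_one]
    noncomm_ring
  rw [expand, map_add, map_sub, map_sub, hc, hc', hcc]
  ring

end Algebraic

section CStarRing

variable {M : Type*} [NormedRing M] [StarRing M] [CStarRing M] [NormedAlgebra ℂ M]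
  [StarModule ℂ M]

lemma opNorm_le (g : M →L[ℂ] ℂ) (hg : ∀ x : M, 0 ≤ g (star x * x)) : ‖g‖ ≤ ‖g 1‖ := by
  have bound (x : M) : ‖g x‖ ≤ √(‖g 1‖ * ‖g‖) * ‖x‖ := by
    have h := norm_apply_star_mul_sq_le g hg 1 x
    rw [star_one, one_mul, one_mul] at h
    have hx : ‖g (star x * x)‖ ≤ ‖g‖ * ‖x‖ ^ 2 := by
      simpa [CStarRing.norm_star_mul_self, sq] using g.le_opNorm (star x * x)
    rw [← Real.sqrt_sq (norm_nonneg (g x)), ← Real.sqrt_sq (norm_nonneg x), ← Real.sqrt_mul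
      (by positivity)]
    exact Real.sqrt_le_sqrt (h.trans (by rw [mul_assoc]; gcongr))
  have h := g.opNorm_le_bound (by positivity) bound
  have hsq : ‖g‖ * ‖g‖ ≤ ‖g 1‖ * ‖g‖ :=
    (mul_self_le_mul_self (norm_nonneg _) h).trans_eq (Real.mul_self_sqrt (by positivity))
  rcases (norm_nonneg g).eq_or_lt with h0 | hpos
  · exact h0 ▸ norm_nonneg _
  · exact le_of_mul_le_mul_right hsq hpos

lemma norm_apply_le_of_norm_le_one (g : M →L[ℂ] ℂ) (hg : ∀ x : M, 0 ≤ g (star x * x)) {c : M}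
    (hc : ‖c‖ ≤ 1) : ‖g c‖ ≤ ‖g 1‖ :=
  calc ‖g c‖ ≤ ‖g‖ * ‖c‖ := g.le_opNorm c
    _ ≤ ‖g 1‖ * 1 := mul_le_mul (opNorm_le g hg) hc (norm_nonneg c) (norm_nonneg _)
    _ = ‖g 1‖ := mul_one _

lemma apply_mul_eq_apply_of_norm_le_one (h : M →L[ℂ] ℂ) (hh : ∀ x : M, 0 ≤ h (star x * x))
    {c : M} (hc : ‖c‖ ≤ 1) (hhc : ∀ x : M, 0 ≤ h (star x * x * c))
    (hcc : h (star c * c) = h 1) (x : M) : h (x * c) = h x := by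
  let F : M →L[ℂ] ℂ := h.comp ((ContinuousLinearMap.mul ℂ M).flip c)
  have hFapp (x : M) : F x = h (x * c) := rfl
  have hFpos (x : M) : 0 ≤ F (star x * x) := hhc x
  have hnorm : ‖h c‖ = ‖h 1‖ := by
    refine le_antisymm (norm_apply_le_of_norm_le_one h hh hc) ?_
    calc ‖h 1‖ = ‖F (star c)‖ := by rw [hFapp, hcc]
      _ = ‖F c‖ := by rw [apply_star F hFpos, Complex.norm_conj]
      _ ≤ ‖F 1‖ := norm_apply_le_of_norm_le_one F hFpos hc
      _ = ‖h c‖ := by rw [hFapp, one_mul]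
  have hc1 : h c = h 1 := by
    have hc0 : 0 ≤ h c := by simpa [hFapp] using hFpos 1
    have h10 : 0 ≤ h 1 := by simpa using hh 1
    rw [Complex.eq_coe_norm_of_nonneg hc0, Complex.eq_coe_norm_of_nonneg h10, hnorm]
  exact apply_mul_eq_apply_of_apply_eq h hh hc1 hcc x

end CStarRing

end PositiveFunctional

lemma isStarProjection_star_mul_self {R : Type*} [Semiring R] [StarRing R] {v : R}
    (hv : v * star v * v = v) : IsStarProjection (star v * v) where
  isIdempotentElem := by rw [IsIdempotentElem, mul_assoc, ← mul_assoc v, hv]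
  isSelfAdjoint := by rw [IsSelfAdjoint, star_mul, star_star]

lemma norm_le_one_of_mul_star_mul_self {M : Type*} [NormedRing M] [StarRing M] [CStarRing M]
    {v : M} (hv : v * star v * v = v) : ‖v‖ ≤ 1 := by
  have h := (isStarProjection_star_mul_self hv).norm_le
  rw [CStarRing.norm_star_mul_self] at h
  nlinarith [norm_nonneg v]

lemma norm_star_mul_le_one {M : Type*} [NormedRing M] [StarRing M] [CStarRing M] {a b : M}
    (ha : a * star a * a = a) (hb : b * star b * b = b) : ‖star a * b‖ ≤ 1 :=
  calc ‖star a * b‖ ≤ ‖a‖ * ‖b‖ := by simpa only [norm_star] using norm_mul_le (star a) b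
    _ ≤ 1 := mul_le_one₀ (norm_le_one_of_mul_star_mul_self ha) (norm_nonneg b)
      (norm_le_one_of_mul_star_mul_self hb)

lemma IsAbsValue.apply_mul_star_mul_self {M : Type*} [NormedRing M] [StarRing M]
    [NormedAlgebra ℂ M] [StarModule ℂ M] {Φ absΦ : M →L[ℂ] ℂ} {v : M}
    (h : IsAbsValue M Φ absΦ v) (x : M) : absΦ (x * (star v * v)) = absΦ x := by
  obtain ⟨hv, hpos, -, hker⟩ := h
  refine PositiveFunctional.apply_mul_eq_apply absΦ hpos ((hker _).mpr ?_) x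
  exact (isStarProjection_star_mul_self hv).one_sub_mul_self

lemma IsAbsValue.apply_eq_apply_map_mul {MT MA : Type*}
    [NormedRing MT] [StarRing MT] [NormedAlgebra ℂ MT] [StarModule ℂ MT]
    [NormedRing MA] [StarRing MA] [NormedAlgebra ℂ MA]
    {Ψ absΨ : MT →L[ℂ] ℂ} {v : MT} {Φ absΦ : MA →L[ℂ] ℂ} {w : MA}
    (hΨ : IsAbsValue MT Ψ absΨ v) (hΦ : IsAbsValue MA Φ absΦ w) (π : MT → MA)
    (hπ_mul : ∀ ξ η : MT, π (ξ * η) = π ξ * π η) (hπ_star : ∀ ξ : MT, π (star ξ) = star (π ξ))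
    (hΨΦ : ∀ ξ : MT, Ψ ξ = Φ (π ξ)) (ξ : MT) :
    absΨ ξ = absΦ (π ξ * (star (π v) * w)) := by
  have hsupp := hΨ.apply_mul_star_mul_self ξ
  obtain ⟨-, -, hΨ_hat, -⟩ := hΨ
  obtain ⟨-, -, hΦ_hat, -⟩ := hΦ
  rw [← hsupp, ← mul_assoc, ← hΨ_hat, hΨΦ, hΦ_hat, hπ_mul, hπ_star, mul_assoc]

theorem stmt2_general {T A MT MA : Type*}
    [NormedRing T] [StarRing T] [NormedAlgebra ℂ T]
    [NormedRing A] [StarRing A] [NormedAlgebra ℂ A]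
    [NormedRing MT] [StarRing MT] [NormedAlgebra ℂ MT] [StarModule ℂ MT]
    [NormedRing MA] [StarRing MA] [CStarRing MA] [NormedAlgebra ℂ MA] [StarModule ℂ MA]
    (BT : BidualSetup T MT) (BA : BidualSetup A MA)
    (π'' : MT →L[ℂ] MA)
    (hπ''_mul : ∀ ξ η : MT, π'' (ξ * η) = π'' ξ * π'' η)
    (hπ''_star : ∀ ξ : MT, π'' (star ξ) = star (π'' ξ))
    (hπ''_surj : Function.Surjective π'')
    (φ : A →L[ℂ] ℂ) (ψ : T →L[ℂ] ℂ)
    (hhatψ : ∀ ξ : MT, BT.hat ψ ξ = BA.hat φ (π'' ξ)) :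
    ∀ ξ : MT, BT.absVal ψ ξ = BA.absVal φ (π'' ξ) := by
  have hψ_eq := (BT.polar ψ).apply_eq_apply_map_mul (BA.polar φ) π'' hπ''_mul hπ''_star hhatψ
  obtain ⟨hv, hψ_pos, hψ_hat, -⟩ := BT.polar ψ
  obtain ⟨hw, hφ_pos, hφ_hat, -⟩ := BA.polar φ
  set c := star (π'' (BT.pIso ψ)) * BA.pIso φ
  have hc_pos (η : MA) : 0 ≤ BA.absVal φ (star η * η * c) := by
    obtain ⟨ξ, rfl⟩ := hπ''_surj η
    rw [← hπ''_star, ← hπ''_mul, ← hψ_eq]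
    exact hψ_pos ξ
  have hcc : BA.absVal φ (star c * c) = BA.absVal φ 1 := by
    obtain ⟨ξ, hξ⟩ := hπ''_surj (star (BA.pIso φ))
    calc BA.absVal φ (star c * c) = BA.absVal φ (π'' (ξ * BT.pIso ψ) * c) := by
          rw [hπ''_mul, hξ, star_mul, star_star]
      _ = BA.absVal φ (star (BA.pIso φ) * BA.pIso φ) := by
          rw [← hψ_eq, ← hψ_hat, hhatψ, hξ, hφ_hat]
      _ = BA.absVal φ 1 := by simpa using (BA.polar φ).apply_mul_star_mul_self 1
  have hc : ‖c‖ ≤ 1 :=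
    norm_star_mul_le_one (by rw [← hπ''_star, ← hπ''_mul, ← hπ''_mul, hv]) hw
  intro ξ
  rw [hψ_eq, PositiveFunctional.apply_mul_eq_apply_of_norm_le_one _ hφ_pos hc hc_pos hcc]

/-- for a *-representation `π : T → π(T) = A` and a bounded functional
`φ` on `A`, one has `|φ ∘ π| = |φ| ∘ π**`, where `π** : T** → A**` is the weak-*
continuous extension of `π` (characterized by `π**(ι_T t) = ι_A (π t)` and
`(φ∘π)^ = φ̂ ∘ π**`). -/
theorem stmt2 {T A MT MA : Type*}
    [NormedRing T] [StarRing T] [CStarRing T] [NormedAlgebra ℂ T] [StarModule ℂ T] [CompleteSpace T]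
    [NormedRing A] [StarRing A] [CStarRing A] [NormedAlgebra ℂ A] [StarModule ℂ A] [CompleteSpace A]
    [NormedRing MT] [StarRing MT] [CStarRing MT] [NormedAlgebra ℂ MT] [StarModule ℂ MT] [CompleteSpace MT]
    [NormedRing MA] [StarRing MA] [CStarRing MA] [NormedAlgebra ℂ MA] [StarModule ℂ MA] [CompleteSpace MA]
    (BT : BidualSetup T MT) (BA : BidualSetup A MA)
    (π : T →⋆ₐ[ℂ] A) (hπ : Function.Surjective π)
    (π'' : MT →L[ℂ] MA)
    (hπ''_mul : ∀ ξ η : MT, π'' (ξ * η) = π'' ξ * π'' η)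
    (hπ''_star : ∀ ξ : MT, π'' (star ξ) = star (π'' ξ))
    (hπ''_surj : Function.Surjective π'')
    (hπ''_ext : ∀ t : T, π'' (BT.ι t) = BA.ι (π t))
    (φ : A →L[ℂ] ℂ) (ψ : T →L[ℂ] ℂ)
    (hψ : ∀ t : T, ψ t = φ (π t))
    (hhatψ : ∀ ξ : MT, BT.hat ψ ξ = BA.hat φ (π'' ξ)) :
    ∀ ξ : MT, BT.absVal ψ ξ = BA.absVal φ (π'' ξ) :=
  stmt2_general BT BA π'' hπ''_mul hπ''_star hπ''_surj φ ψ hhatψ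
end

section
/- Let 𝔗 be a C*-algebra and φ, ψ bounded linear functionals on 𝔗 with φ absolutely continuous with respect to ψ (i.e. for ξ ∈ 𝔗**, |ψ|(ξ*ξ) = 0 implies |φ|(ξ*ξ) = 0). If ξ ∈ 𝔗** satisfies |ψ|(ξ*ξ) = 0, then φ̂(ξ*η) = 0 for every η ∈ 𝔗**. -/
open ComplexOrder Filter Topology

/-- If `0 ≤ t*c + t^2*d` (in `ComplexOrder`) for all real `t`, with `0 ≤ d`, then `c = 0`. -/
lemma aux_coeff_zero (c d : ℂ) (hd : 0 ≤ d)
    (h : ∀ t : ℝ, 0 ≤ (t : ℂ) * c + (t : ℂ) ^ 2 * d) : c = 0 := by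
  rw [Complex.nonneg_iff] at hd
  have hdim : d.im = 0 := hd.2.symm
  have him : c.im = 0 := by
    have h1 := (Complex.nonneg_iff.mp (h 1)).2
    simpa [hdim] using h1.symm
  have hre : ∀ t : ℝ, 0 ≤ t * c.re + t * t * d.re := by
    intro t
    have h' := (Complex.nonneg_iff.mp (h t)).1
    simp only [Complex.add_re, Complex.mul_re, Complex.ofReal_re, Complex.ofReal_im,
      pow_two, Complex.mul_im, him, hdim, mul_zero, zero_mul, sub_zero, add_zero,
      mul_one, zero_add] at h'
    linarith [h']
  have hpos : (0:ℝ) < d.re + 1 := by linarith [hd.1]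
  have hne : d.re + 1 ≠ 0 := ne_of_gt hpos
  have hcle : c.re ≤ 0 := by
    refine le_of_forall_pos_le_add fun δ hδ => ?_
    set ε := δ / (d.re + 1) with hε_def
    have hε : 0 < ε := div_pos hδ hpos
    have heq : ε * (d.re + 1) = δ := div_mul_cancel₀ δ hne
    have h1 := hre (-ε)
    nlinarith [h1, hε, hd.1, heq, sq_nonneg ε]
  have hcge : (0:ℝ) ≤ c.re := by
    have : -c.re ≤ 0 := by
      refine le_of_forall_pos_le_add fun δ hδ => ?_
      set ε := δ / (d.re + 1) with hε_def
      have hε : 0 < ε := div_pos hδ hpos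
      have heq : ε * (d.re + 1) = δ := div_mul_cancel₀ δ hne
      have h1 := hre ε
      nlinarith [h1, hε, hd.1, heq, sq_nonneg ε]
    linarith
  exact Complex.ext (le_antisymm hcle hcge) him

/-- Degenerate Cauchy–Schwarz: a positive functional vanishing on `ξ*ξ`
vanishes on `ξ* a` for every `a`. -/
lemma aux_cs {M : Type*} [NormedRing M] [StarRing M] [NormedAlgebra ℂ M] [StarModule ℂ M]
    (f : M →L[ℂ] ℂ) (hf : ∀ x : M, 0 ≤ f (star x * x))
    (ξ : M) (h0 : f (star ξ * ξ) = 0) (a : M) : f (star ξ * a) = 0 := by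
  set q := f (star ξ * a) with hq
  set p := f (star a * ξ) with hp
  set d := f (star a * a) with hdd
  have expand : ∀ l : ℂ,
      f (star (ξ + l • a) * (ξ + l • a)) = l * q + (starRingEnd ℂ l) * p
        + (l * starRingEnd ℂ l) * d := by
    intro l
    have hmul : star (ξ + l • a) * (ξ + l • a)
        = star ξ * ξ + l • (star ξ * a) + (starRingEnd ℂ l) • (star a * ξ)
          + (l * starRingEnd ℂ l) • (star a * a) := by
      simp only [star_add, star_smul, add_mul, mul_add, smul_mul_assoc, mul_smul_comm,
        starRingEnd_apply, smul_smul, smul_add]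
      abel
    rw [hmul]
    simp only [map_add, map_smul, h0, smul_eq_mul, zero_add]
    try ring
  have hd : 0 ≤ d := hf a
  have key : ∀ c : ℂ, (∀ t : ℝ, 0 ≤ (t : ℂ) * c + (t : ℂ) ^ 2 * d) → c = 0 :=
    fun c hc => aux_coeff_zero c d hd hc
  have h1 : q + p = 0 := by
    refine key _ fun t => ?_
    have h' := hf (ξ + (t : ℂ) • a)
    rw [expand] at h'
    have heq : (t : ℂ) * (q + p) + (t : ℂ) ^ 2 * d
        = (t : ℂ) * q + (starRingEnd ℂ (t : ℂ)) * p
          + ((t : ℂ) * starRingEnd ℂ (t : ℂ)) * d := by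
      rw [Complex.conj_ofReal]; ring
    rw [heq]; exact h'
  have h2 : Complex.I * (q - p) = 0 := by
    refine key _ fun t => ?_
    have h' := hf (ξ + ((t : ℂ) * Complex.I) • a)
    rw [expand] at h'
    have heq : (t : ℂ) * (Complex.I * (q - p)) + (t : ℂ) ^ 2 * d
        = ((t : ℂ) * Complex.I) * q + (starRingEnd ℂ ((t : ℂ) * Complex.I)) * p
          + (((t : ℂ) * Complex.I) * starRingEnd ℂ ((t : ℂ) * Complex.I)) * d := by
      rw [map_mul, Complex.conj_ofReal, Complex.conj_I]
      linear_combination (t : ℂ) ^ 2 * d * Complex.I_sq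
    rw [heq]; exact h'
  have h3 : q - p = 0 := by
    rcases mul_eq_zero.mp h2 with h | h
    · exact absurd h Complex.I_ne_zero
    · exact h
  have h4 : (2 : ℂ) * q = 0 := by linear_combination h1 + h3
  exact (mul_eq_zero.mp h4).resolve_left two_ne_zero

/-- if `φ ≪ ψ` and `ξ ∈ T**` satisfies `|ψ|(ξ*ξ) = 0`, then
`φ̂(ξ*η) = 0` for every `η ∈ T**`. -/
theorem stmt3 {T M : Type*}
    [NormedRing T] [StarRing T] [CStarRing T] [NormedAlgebra ℂ T] [StarModule ℂ T] [CompleteSpace T]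
    [NormedRing M] [StarRing M] [CStarRing M] [NormedAlgebra ℂ M] [StarModule ℂ M] [CompleteSpace M]
    (B : BidualSetup T M) (φ ψ : T →L[ℂ] ℂ)
    (hac : AbsCont B φ ψ)
    (ξ : M) (hξ : B.absVal ψ (star ξ * ξ) = 0) :
    ∀ η : M, B.hat φ (star ξ * η) = 0 := by
  intro η
  obtain ⟨hv, hpos, hrep, hker⟩ := B.polar φ
  have hφξ : B.absVal φ (star ξ * ξ) = 0 := hac ξ hξ
  rw [hrep]
  have : star ξ * η * B.pIso φ = star ξ * (η * B.pIso φ) := by rw [mul_assoc]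
  rw [this]
  exact aux_cs (B.absVal φ) hpos ξ hφξ (η * B.pIso φ)
end

section
/- Let 𝔗 be a C*-algebra, ψ a bounded linear functional on 𝔗, η ∈ 𝔗**, and define φ = ψ̂(· η) (i.e. φ(t) = ψ̂(tη) for t ∈ 𝔗). Then φ is absolutely continuous with respect to ψ: for every ξ ∈ 𝔗**, |ψ|(ξ*ξ) = 0 implies |φ|(ξ*ξ) = 0. -/
open ComplexOrder Filter Topology

private lemma real_line_zero (c d : ℂ) (h : ∀ r : ℝ, 0 ≤ (r : ℂ) * c + d) : c = 0 := by
  have him : c.im = 0 := by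
    have h1 := (Complex.le_def.mp (h 1)).2
    have h2 := (Complex.le_def.mp (h (-1))).2
    simp [Complex.add_im, Complex.mul_im] at h1 h2
    linarith
  have hre : c.re = 0 := by
    by_contra hc
    have hr := (Complex.le_def.mp (h ((-(d.re) - 1) / c.re))).1
    rw [Complex.add_re, Complex.mul_re] at hr
    simp [him] at hr
    rw [div_mul_cancel₀ _ hc] at hr
    linarith
  exact Complex.ext hre him

private lemma cs_deg {M : Type*} [NormedRing M] [StarRing M] [NormedAlgebra ℂ M]
    [StarModule ℂ M] (f : M →L[ℂ] ℂ) (hpos : ∀ x : M, 0 ≤ f (star x * x)) {a : M}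
    (ha : f (star a * a) = 0) (b : M) : f (star a * b) = 0 ∧ f (star b * a) = 0 := by
  have expand : ∀ t : ℂ, f (star (t • a + b) * (t • a + b))
      = star t * f (star a * b) + t * f (star b * a) + f (star b * b) := by
    intro t
    simp only [star_add, star_smul, add_mul, mul_add, smul_mul_assoc, mul_smul_comm,
      smul_smul, smul_add, map_add, map_smul, smul_eq_mul, ha, mul_zero]
    ring
  have key : ∀ t : ℂ,
      0 ≤ star t * f (star a * b) + t * f (star b * a) + f (star b * b) := by
    intro t
    have := hpos (t • a + b)
    rwa [expand t] at this
  have h1 : f (star a * b) + f (star b * a) = 0 := by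
    apply real_line_zero _ (f (star b * b))
    intro r
    have := key (r : ℂ)
    have hstar : star (r : ℂ) = (r : ℂ) := by
      simp [Complex.star_def, Complex.conj_ofReal]
    rw [hstar] at this
    convert this using 1
    ring
  have h2 : Complex.I * (f (star b * a) - f (star a * b)) = 0 := by
    apply real_line_zero _ (f (star b * b))
    intro r
    have := key ((r : ℂ) * Complex.I)
    have hstar : star ((r : ℂ) * Complex.I) = -((r : ℂ) * Complex.I) := by
      simp [Complex.star_def, Complex.conj_ofReal]
    rw [hstar] at this
    convert this using 1
    ring
  have h2' : f (star b * a) = f (star a * b) :=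
    sub_eq_zero.mp ((mul_eq_zero.mp h2).resolve_left Complex.I_ne_zero)
  rw [h2'] at h1
  have hA : f (star a * b) = 0 := add_self_eq_zero.mp h1
  exact ⟨hA, h2'.trans hA⟩

/-- for `η ∈ T**` and `φ = ψ̂(· η)` (so `φ̂ = ψ̂(· η)` as well),
`φ` is absolutely continuous with respect to `ψ`. -/
theorem stmt4 {T M : Type*}
    [NormedRing T] [StarRing T] [CStarRing T] [NormedAlgebra ℂ T] [StarModule ℂ T] [CompleteSpace T]
    [NormedRing M] [StarRing M] [CStarRing M] [NormedAlgebra ℂ M] [StarModule ℂ M] [CompleteSpace M]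
    (B : BidualSetup T M) (ψ φ : T →L[ℂ] ℂ) (η : M)
    (hφ : ∀ t : T, φ t = B.hat ψ (B.ι t * η))
    (hhatφ : ∀ ξ : M, B.hat φ ξ = B.hat ψ (ξ * η)) :
    AbsCont B φ ψ := by
  obtain ⟨hvφ, hposφ, hpolφ, hiffφ⟩ := B.polar φ
  obtain ⟨hvψ, hposψ, hpolψ, hiffψ⟩ := B.polar ψ
  intro ξ hξ
  set v := B.pIso φ with hv
  have hss : (star v * v) * (star v * v) = star v * v := by
    calc (star v * v) * (star v * v) = star v * (v * star v * v) := by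
          rw [mul_assoc]; rw [← mul_assoc v (star v) v]
      _ = star v * v := by rw [hvφ]
  have hproj : (1 - star v * v) * (star v * v) = 0 := by
    rw [sub_mul, one_mul, hss, sub_self]
  have hs1 : B.absVal φ (star (1 - star v * v) * (1 - star v * v)) = 0 :=
    (hiffφ (1 - star v * v)).mpr hproj
  have hres : ∀ x : M, B.absVal φ x = B.absVal φ (x * (star v * v)) := by
    intro x
    have h0 := (cs_deg (B.absVal φ) hposφ hs1 (star x)).2
    rw [star_star, mul_sub, mul_one, map_sub, sub_eq_zero] at h0
    exact h0
  have step1 : B.absVal φ (star ξ * ξ)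
      = B.absVal ψ (star ξ * (ξ * (star v * (η * B.pIso ψ)))) := by
    rw [hres (star ξ * ξ)]
    have e1 : star ξ * ξ * (star v * v) = (star ξ * ξ * star v) * v := by
      simp only [mul_assoc]
    rw [e1, ← hpolφ, hhatφ, hpolψ]
    congr 1
    simp only [mul_assoc]
  rw [step1]
  exact (cs_deg (B.absVal ψ) hposψ hξ (ξ * (star v * (η * B.pIso ψ)))).1
end

section
/- There exist a state ψ and a bounded linear functional φ on the C*-algebra B(ℂ²) of 2×2 matrices such that φ is absolutely continuous with respect to ψ, but the adjoint functional φ† (defined by φ†(t) = conjugate of φ(t*)) is not absolutely continuous with respect to ψ† = ψ. -/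
open ComplexOrder Filter Topology

/-!
For unit vectors `x, y` the vector functional `t ↦ ⟪x, t y⟫` has polar decomposition
`|φ| = ⟪x, · x⟫` with partial isometry `|y⟩⟨x|`, so its support is `x`. Taking `φ = ⟪e₀, · e₁⟫` and
the vector state `ψ = ⟪e₀, · e₀⟫` gives `|φ| = |ψ|`, hence `φ ≪ ψ`; but `φ† = ⟪e₁, · e₀⟫` is
supported on `e₁ ⊥ e₀`, and `ξ = |e₁⟩⟨e₁|` is killed by `|ψ|` but not by `|φ†|`.
-/

open InnerProductSpace ContinuousLinearMap

noncomputable section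

variable {H : Type*} [NormedAddCommGroup H] [InnerProductSpace ℂ H]

def vectorFunctional (x y : H) : (H →L[ℂ] H) →L[ℂ] ℂ :=
  (innerSL ℂ x).comp (ContinuousLinearMap.apply ℂ H y)

@[simp]
lemma vectorFunctional_apply (x y : H) (t : H →L[ℂ] H) :
    vectorFunctional x y t = inner ℂ x (t y) := rfl

variable [CompleteSpace H]

lemma vectorFunctional_star (x y : H) (t : H →L[ℂ] H) :
    vectorFunctional y x t = starRingEnd ℂ (vectorFunctional x y (star t)) := by
  rw [vectorFunctional_apply, vectorFunctional_apply, star_eq_adjoint, adjoint_inner_right,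
    inner_conj_symm]

lemma vectorFunctional_star_mul_self (x : H) (ξ : H →L[ℂ] H) :
    vectorFunctional x x (star ξ * ξ) = ((‖ξ x‖ ^ 2 : ℝ) : ℂ) := by
  rw [vectorFunctional_apply, mul_apply_eq_comp, star_eq_adjoint, adjoint_inner_right,
    inner_self_eq_norm_sq_to_K]
  norm_cast

lemma vectorFunctional_star_mul_self_nonneg (x : H) (ξ : H →L[ℂ] H) :
    0 ≤ vectorFunctional x x (star ξ * ξ) := by
  rw [vectorFunctional_star_mul_self]
  exact Complex.zero_le_real.mpr (by positivity)

lemma vectorFunctional_star_mul_self_eq_zero_iff (x : H) (ξ : H →L[ℂ] H) :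
    vectorFunctional x x (star ξ * ξ) = 0 ↔ ξ x = 0 := by
  rw [vectorFunctional_star_mul_self, Complex.ofReal_eq_zero, sq_eq_zero_iff, norm_eq_zero]

lemma isAbsValue_vectorFunctional {x y : H} (hx : ‖x‖ = 1) (hy : ‖y‖ = 1) :
    IsAbsValue (H →L[ℂ] H) (vectorFunctional x y) (vectorFunctional x x) (rankOne ℂ y x) := by
  have hxx : inner ℂ x x = (1 : ℂ) := by simp [hx]
  have hyy : inner ℂ y y = (1 : ℂ) := by simp [hy]
  have hx₀ : x ≠ 0 := norm_ne_zero_iff.mp (by simp [hx])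
  have hsupp : star (rankOne ℂ y x) * rankOne ℂ y x = rankOne ℂ x x := by
    rw [star_eq_adjoint, adjoint_rankOne, mul_def, rankOne_comp_rankOne, hyy, one_smul]
  refine ⟨?_, vectorFunctional_star_mul_self_nonneg x, fun ξ ↦ ?_, fun ξ ↦ ?_⟩
  · rw [mul_assoc, hsupp, mul_def, rankOne_comp_rankOne, hxx, one_smul]
  · simp [hx]
  · rw [hsupp, vectorFunctional_star_mul_self_eq_zero_iff, mul_def ξ, comp_rankOne, rankOne_eq_zero]
    simp [hx₀]

lemma not_forall_vectorFunctional_star_mul_self_eq_zero_imp {x y : H}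
    (hxy : inner ℂ y x = (0 : ℂ)) (hy : y ≠ 0) :
    ¬ ∀ ξ : H →L[ℂ] H, vectorFunctional x x (star ξ * ξ) = 0 →
      vectorFunctional y y (star ξ * ξ) = 0 := by
  intro h
  have hkill := h (rankOne ℂ y y) ((vectorFunctional_star_mul_self_eq_zero_iff _ _).mpr
    (by simp [hxy]))
  rw [vectorFunctional_star_mul_self_eq_zero_iff] at hkill
  simp [hy] at hkill

end

/-- on the C*-algebra `B(ℂ²)` (which is its own bidual, so
functionals coincide with their weak-* continuous extensions) there exist a state `ψ`
and a bounded functional `φ` such that `φ ≪ ψ` but the adjoint functional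
`φ†(t) = conj (φ (t*))` is *not* absolutely continuous with respect to `ψ† = ψ`. -/
theorem stmt5 :
    ∃ (ψ φ φd absφ absψ absφd :
        (EuclideanSpace ℂ (Fin 2) →L[ℂ] EuclideanSpace ℂ (Fin 2)) →L[ℂ] ℂ)
      (v w u : EuclideanSpace ℂ (Fin 2) →L[ℂ] EuclideanSpace ℂ (Fin 2)),
      -- ψ is a state
      (∀ t, 0 ≤ ψ (star t * t)) ∧ ψ 1 = 1 ∧
      -- ψ is self-adjoint, i.e. ψ† = ψ
      (∀ t, ψ t = starRingEnd ℂ (ψ (star t))) ∧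
      -- φd is the adjoint functional φ†
      (∀ t, φd t = starRingEnd ℂ (φ (star t))) ∧
      -- polar decompositions of φ, ψ, φ†
      IsAbsValue _ φ absφ v ∧ IsAbsValue _ ψ absψ w ∧ IsAbsValue _ φd absφd u ∧
      -- φ ≪ ψ
      (∀ ξ, absψ (star ξ * ξ) = 0 → absφ (star ξ * ξ) = 0) ∧
      -- but not φ† ≪ ψ
      ¬(∀ ξ, absψ (star ξ * ξ) = 0 → absφd (star ξ * ξ) = 0) := by
  let e₀ : EuclideanSpace ℂ (Fin 2) := EuclideanSpace.single 0 1
  let e₁ : EuclideanSpace ℂ (Fin 2) := EuclideanSpace.single 1 1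
  have he₀ : ‖e₀‖ = 1 := by simp [e₀]
  have he₁ : ‖e₁‖ = 1 := by simp [e₁]
  refine ⟨vectorFunctional e₀ e₀, vectorFunctional e₀ e₁, vectorFunctional e₁ e₀,
    vectorFunctional e₀ e₀, vectorFunctional e₀ e₀, vectorFunctional e₁ e₁,
    rankOne ℂ e₁ e₀, rankOne ℂ e₀ e₀, rankOne ℂ e₀ e₁,
    vectorFunctional_star_mul_self_nonneg e₀, by simp [he₀], vectorFunctional_star e₀ e₀,
    vectorFunctional_star e₀ e₁, isAbsValue_vectorFunctional he₀ he₁,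
    isAbsValue_vectorFunctional he₀ he₀, isAbsValue_vectorFunctional he₁ he₀, fun _ ↦ id, ?_⟩
  exact not_forall_vectorFunctional_star_mul_self_eq_zero_imp
    (by simp [e₀, e₁, EuclideanSpace.inner_single_left]) (by simp [e₁])
end

section
/- Let 𝔗 be a unital C*-algebra, 𝒜 ⊂ 𝔗 a unital norm-closed subalgebra, and q ∈ 𝔗** a closed projection. If q is a null projection, i.e. |φ|(q) = 0 for every φ ∈ 𝒜^⊥, then q ∈ 𝒜^{⊥⊥} (the weak-* closure of 𝒜 in 𝔗**). -/
open ComplexOrder Filter Topology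

section Proj

variable {T M : Type*} [NormedRing T] [StarRing T] [NormedAlgebra ℂ T]
  [NormedRing M] [StarRing M] [NormedAlgebra ℂ M]

/-- An increasing net of positive contractions of `T` converging to `p ∈ T**` in the
weak-* topology of `T**` (tested against all functionals `hat φ`, `φ ∈ T*`). -/
structure IncreasingApprox (B : BidualSetup T M) (p : M) where
  D : Type
  [pre : Preorder D]
  [dir : IsDirected D (· ≤ ·)]
  [ne : Nonempty D]
  t : D → T
  pos : ∀ d, ∃ s : T, t d = star s * s
  contr : ∀ d, ‖t d‖ ≤ 1
  mono : ∀ d₁ d₂, d₁ ≤ d₂ → ∃ c : M, B.ι (t d₂) - B.ι (t d₁) = star c * c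
  tendsto : ∀ φ : T →L[ℂ] ℂ,
    Filter.Tendsto (fun d => B.hat φ (B.ι (t d))) Filter.atTop (nhds (B.hat φ p))

/-- `p ∈ T**` is an open projection (in the sense of Akemann): it is a projection and
the weak-* limit of an increasing net of positive contractions of `T`. -/
def IsOpenProj (B : BidualSetup T M) (p : M) : Prop :=
  IsSelfAdjoint p ∧ p * p = p ∧ Nonempty (IncreasingApprox B p)

/-- `q ∈ T**` is a closed projection: `1 - q` is open. -/
def IsClosedProj (B : BidualSetup T M) (q : M) : Prop :=
  IsSelfAdjoint q ∧ q * q = q ∧ IsOpenProj B (1 - q)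

end Proj

/-- Degenerate Cauchy–Schwarz: if `f` is a positive functional and `f(x*x) = 0`,
then `f(x*y) = 0` for every `y`. -/
lemma cs_zero {M : Type*} [NormedRing M] [StarRing M] [NormedAlgebra ℂ M] [StarModule ℂ M]
    (f : M →L[ℂ] ℂ) (hpos : ∀ ξ : M, 0 ≤ f (star ξ * ξ)) (x y : M)
    (hx : f (star x * x) = 0) : f (star x * y) = 0 := by
  set a := f (star x * y) with ha
  set b := f (star y * x) with hb
  set c := f (star y * y) with hc
  have key : ∀ s : ℂ, 0 ≤ (starRingEnd ℂ) s * a + s * b + c := by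
    intro s
    have h := hpos (s • x + y)
    have expand : star (s • x + y) * (s • x + y)
        = ((starRingEnd ℂ) s * s) • (star x * x) + (starRingEnd ℂ) s • (star x * y)
          + s • (star y * x) + star y * y := by
      simp only [star_add, star_smul, RCLike.star_def, add_mul, mul_add, smul_mul_assoc,
        mul_smul_comm, smul_smul, smul_add]
      module
    rw [expand] at h
    simp only [map_add, map_smul, smul_eq_mul, hx, mul_zero, zero_add, ← ha, ← hb, ← hc] at h
    convert h using 1
  -- from `key`, derive that `conj u * a + u * b = 0` for every `u`
  have hg : ∀ u : ℂ, (starRingEnd ℂ) u * a + u * b = 0 := by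
    intro u
    set w : ℂ := (starRingEnd ℂ) u * a + u * b with hw
    have ht : ∀ t : ℝ, 0 ≤ (t : ℂ) * w + c := by
      intro t
      have := key ((t : ℂ) * u)
      convert this using 1
      simp only [map_mul, Complex.conj_ofReal]
      ring
    have h0 := ht 0
    have h1 := ht 1
    simp only [Complex.ofReal_zero, zero_mul, zero_add] at h0
    simp only [Complex.ofReal_one, one_mul] at h1
    rw [Complex.le_def] at h0 h1
    have hcim : c.im = 0 := h0.2.symm
    have hwim : w.im = 0 := by
      have := h1.2
      simp only [Complex.add_im] at this
      linarith
    have hwre : w.re = 0 := by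
      by_contra hr
      have h2 := ht (-(c.re + 1) / w.re)
      rw [Complex.le_def] at h2
      have h2re := h2.1
      have hre : (((-(c.re + 1) / w.re : ℝ) : ℂ) * w + c).re
          = (-(c.re + 1) / w.re) * w.re + c.re := by
        simp [Complex.add_re, Complex.mul_re, Complex.ofReal_re, Complex.ofReal_im, hwim]
      rw [hre, div_mul_cancel₀ _ hr] at h2re
      simp only [Complex.zero_re] at h2re
      linarith
    exact Complex.ext hwre hwim
  have h1 := hg 1
  have hI := hg Complex.I
  simp only [map_one, one_mul] at h1
  simp only [Complex.conj_I] at hI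
  -- h1 : a + b = 0, hI : -I * a + I * b = 0
  have hb' : b = a := by
    have : Complex.I * (b - a) = 0 := by linear_combination hI
    rcases mul_eq_zero.mp this with h | h
    · exact absurd h Complex.I_ne_zero
    · exact sub_eq_zero.mp h
  have : a + a = 0 := by rw [← hb'] at h1 ⊢; linear_combination h1
  linear_combination this / 2

/-- if a closed projection `q ∈ T**` is null for the unital
norm-closed subalgebra `𝒜 ⊂ T` (i.e. `|φ|(q) = 0` for every `φ ∈ 𝒜^⊥`), then
`q ∈ 𝒜^{⊥⊥}` (i.e. `φ̂(q) = 0` for every `φ ∈ 𝒜^⊥`). -/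
theorem stmt17 {T M : Type*}
    [NormedRing T] [StarRing T] [CStarRing T] [NormedAlgebra ℂ T] [StarModule ℂ T] [CompleteSpace T]
    [NormedRing M] [StarRing M] [CStarRing M] [NormedAlgebra ℂ M] [StarModule ℂ M] [CompleteSpace M]
    (B : BidualSetup T M)
    (A : Subalgebra ℂ T) (hA : IsClosed (A : Set T))
    (q : M) (hq : IsClosedProj B q)
    (hnull : ∀ φ : T →L[ℂ] ℂ, (∀ a ∈ A, φ a = 0) → B.absVal φ q = 0) :
    ∀ φ : T →L[ℂ] ℂ, (∀ a ∈ A, φ a = 0) → B.hat φ q = 0 := by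
  intro φ hφ
  obtain ⟨hv, hpos, hrep, hsupp⟩ := B.polar φ
  have hq0 : B.absVal φ (star q * q) = 0 := by
    rw [hq.1.star_eq, hq.2.1]
    exact hnull φ hφ
  have := cs_zero (B.absVal φ) hpos q (B.pIso φ) hq0
  rw [hrep q, ← hq.1.star_eq]
  exact this
end
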